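/- Let R = R₀ ⊕ R₁ be a Z₂-graded commutative ring. Then the Z₂-graded maximal ideals of R are exactly the ideals p + R₁, where p is a maximal ideal of R₀ containing R₁², together with the ideals p + p·R₁, where p is a maximal ideal of R₀ not containing R₁². -/

import Mathlib

/-- A `ℤ/2ℤ`-grading on a commutative ring `R`: additive subgroups `R0`, `R1` with
`R = R0 ⊕ R1` (internal direct sum) and `Rᵢ · Rⱼ ⊆ R_{i+j}`. -/
structure Z2Grading (R : Type*) [CommRing R] where
  R0 : AddSubgroup R
  R1 : AddSubgroup R
  one_mem : (1 : R) ∈ R0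
  mul_mem_00 : ∀ {a b : R}, a ∈ R0 → b ∈ R0 → a * b ∈ R0
  mul_mem_01 : ∀ {a b : R}, a ∈ R0 → b ∈ R1 → a * b ∈ R1
  mul_mem_11 : ∀ {a b : R}, a ∈ R1 → b ∈ R1 → a * b ∈ R0
  sup_eq_top : R0 ⊔ R1 = ⊤
  inf_eq_bot : R0 ⊓ R1 = ⊥

/-- The sum `S + T` of two subsets of `R`. -/
def setSum {R : Type*} [CommRing R] (S T : Set R) : Set R :=
  {z : R | ∃ a ∈ S, ∃ b ∈ T, z = a + b}

/-- The additive subgroup of `R` generated by the pairwise products of `S` and `T`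
(i.e. the product `S·T` of an ideal/submodule pair). -/
def mulSet {R : Type*} [CommRing R] (S T : Set R) : AddSubgroup R :=
  AddSubgroup.closure {x : R | ∃ a ∈ S, ∃ b ∈ T, x = a * b}

namespace Z2Grading

variable {R : Type*} [CommRing R] (G : Z2Grading R)

/-- The set of homogeneous elements of `R`, namely `R₀ ∪ R₁`. -/
def homogeneous : Set R := ↑G.R0 ∪ ↑G.R1

/-- `R₁²`, the ideal of `R₀` generated by the products of two elements of `R₁`. -/
def sq : AddSubgroup R := mulSet (↑G.R1) (↑G.R1)

/-- `R₁³ = R₁² · R₁`, an `R₀`-submodule of `R₁`. -/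
def cube : AddSubgroup R := mulSet (↑G.sq) (↑G.R1)

/-- `I` is an ideal of the subring `R₀` (viewed inside `R`). -/
def IsIdeal0 (I : AddSubgroup R) : Prop :=
  (I : Set R) ⊆ ↑G.R0 ∧ ∀ a ∈ G.R0, ∀ x ∈ I, a * x ∈ I

/-- `N` is an `R₀`-submodule of `R₁` (viewed inside `R`). -/
def IsSubmodule1 (N : AddSubgroup R) : Prop :=
  (N : Set R) ⊆ ↑G.R1 ∧ ∀ a ∈ G.R0, ∀ x ∈ N, a * x ∈ N

/-- The residual `(N :_{R₀} R₁) = {a ∈ R₀ : a·R₁ ⊆ N}`. -/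
def residual (N : AddSubgroup R) : AddSubgroup R where
  carrier := {a : R | a ∈ G.R0 ∧ ∀ r ∈ G.R1, a * r ∈ N}
  zero_mem' := ⟨G.R0.zero_mem, fun r _ => by simpa using N.zero_mem⟩
  add_mem' := by
    rintro a b ⟨ha0, ha⟩ ⟨hb0, hb⟩
    exact ⟨G.R0.add_mem ha0 hb0, fun r hr => by
      rw [add_mul]; exact N.add_mem (ha r hr) (hb r hr)⟩
  neg_mem' := by
    rintro a ⟨ha0, ha⟩
    exact ⟨G.R0.neg_mem ha0, fun r hr => by
      rw [neg_mul]; exact N.neg_mem (ha r hr)⟩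

/-- `J` is a `ℤ₂`-graded ideal of `R`: the homogeneous components of each of its
elements again belong to `J`, i.e. `J = (J ∩ R₀) ⊕ (J ∩ R₁)`. -/
def IsGradedIdeal (J : Ideal R) : Prop :=
  ∀ x ∈ J, ∃ a b : R, a ∈ G.R0 ∧ b ∈ G.R1 ∧ a ∈ J ∧ b ∈ J ∧ x = a + b

/-- `J` is a `ℤ₂`-graded prime ideal of `R`. -/
def IsGradedPrime (J : Ideal R) : Prop :=
  G.IsGradedIdeal J ∧ J ≠ ⊤ ∧
    ∀ r ∈ G.homogeneous, ∀ s ∈ G.homogeneous, r * s ∈ J → r ∈ J ∨ s ∈ J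

/-- `J` is a `ℤ₂`-graded maximal ideal of `R`. -/
def IsGradedMaximal (J : Ideal R) : Prop :=
  G.IsGradedIdeal J ∧ J ≠ ⊤ ∧
    ∀ J' : Ideal R, G.IsGradedIdeal J' → J ≤ J' → J' = J ∨ J' = ⊤

/-- `p` is a prime ideal of the subring `R₀`. -/
def IsPrime0 (p : AddSubgroup R) : Prop :=
  G.IsIdeal0 p ∧ (p : Set R) ≠ ↑G.R0 ∧
    ∀ a ∈ G.R0, ∀ b ∈ G.R0, a * b ∈ p → a ∈ p ∨ b ∈ p

/-- `p` is a maximal ideal of the subring `R₀`. -/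
def IsMaximal0 (p : AddSubgroup R) : Prop :=
  G.IsIdeal0 p ∧ (p : Set R) ≠ ↑G.R0 ∧
    ∀ I : AddSubgroup R, G.IsIdeal0 I → p ≤ I → (I : Set R) = ↑p ∨ (I : Set R) = ↑G.R0

/-- `N` is a prime `R₀`-submodule of `R₁`. -/
def IsPrimeSubmodule1 (N : AddSubgroup R) : Prop :=
  G.IsSubmodule1 N ∧ (N : Set R) ≠ ↑G.R1 ∧
    ∀ a ∈ G.R0, ∀ m ∈ G.R1, a * m ∈ N → a ∈ G.residual N ∨ m ∈ N

/-- `N` is a maximal (proper) `R₀`-submodule of `R₁`. -/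
def IsMaximalSubmodule1 (N : AddSubgroup R) : Prop :=
  G.IsSubmodule1 N ∧ (N : Set R) ≠ ↑G.R1 ∧
    ∀ N' : AddSubgroup R, G.IsSubmodule1 N' → N ≤ N' →
      (N' : Set R) = ↑N ∨ (N' : Set R) = ↑G.R1

/-- `R` is a `ℤ₂`-graded integral domain. -/
def IsGradedDomain : Prop :=
  (1 : R) ≠ 0 ∧
    ∀ r ∈ G.homogeneous, ∀ s ∈ G.homogeneous, r * s = 0 → r = 0 ∨ s = 0

/-- `R` is a `ℤ₂`-graded field. -/
def IsGradedField : Prop :=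
  (1 : R) ≠ 0 ∧ ∀ r ∈ G.homogeneous, r ≠ 0 → IsUnit r

/-- `R₀` as a subring of `R`. -/
def toSubring : Subring R where
  carrier := ↑G.R0
  one_mem' := G.one_mem
  mul_mem' := fun ha hb => G.mul_mem_00 ha hb
  zero_mem' := G.R0.zero_mem
  add_mem' := fun ha hb => G.R0.add_mem ha hb
  neg_mem' := fun ha => G.R0.neg_mem ha

/-- The Zariski topology on the homogeneous spectrum `Z₂Spec R`: closed sets are the
`V(I) = {P : I ⊆ P}` for `ℤ₂`-graded ideals `I`. -/
def gradedZariski : TopologicalSpace {Q : Ideal R // G.IsGradedPrime Q} :=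
  TopologicalSpace.generateFrom
    {U : Set {Q : Ideal R // G.IsGradedPrime Q} |
      ∃ I : Ideal R, G.IsGradedIdeal I ∧ U = {P | ¬ I ≤ P.1}}

end Z2Grading

/-! The degree-0 part `p = Q ∩ R₀` of a graded maximal ideal `Q` is maximal in `R₀`: for
`x ∈ R₀ \ Q` the graded ideal `Q + R x` is all of `R`, and the degree-0 component of
`1 = q + r x` inverts `x` modulo `p`. Conversely, for `p` maximal in `R₀` and `N ⊆ R₁`, the
ideal `p + N` is graded maximal as soon as `N` contains every `b ∈ R₁` with `R₁ b ⊆ p`, so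
everything comes down to this set of `b`. If `R₁² ⊆ p` it is all of `R₁`. Otherwise some
`s t` with `s, t ∈ R₁` is invertible modulo `p`, say `1 - c s t ∈ p`, and
`b = (1 - c s t) b + (t b)(s c)` lies in `p R₁`. -/

lemma mul_mem_mulSet {R : Type*} [CommRing R] {S T : Set R} {a b : R} (ha : a ∈ S)
    (hb : b ∈ T) : a * b ∈ mulSet S T :=
  AddSubgroup.subset_closure ⟨a, ha, b, hb, rfl⟩

lemma mulSet_le {R : Type*} [CommRing R] {S T : Set R} {H : AddSubgroup R}
    (h : ∀ a ∈ S, ∀ b ∈ T, a * b ∈ H) : mulSet S T ≤ H :=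
  (AddSubgroup.closure_le H).2 fun _ ⟨a, ha, b, hb, hx⟩ => hx ▸ h a ha b hb

namespace Z2Grading

variable {R : Type*} [CommRing R] {G : Z2Grading R}

variable (G) in
lemma exists_add_eq (x : R) : ∃ a ∈ G.R0, ∃ b ∈ G.R1, a + b = x :=
  AddSubgroup.mem_sup.1 (G.sup_eq_top ▸ AddSubgroup.mem_top x)

lemma eq_of_add_eq_add {a b a' b' : R} (ha : a ∈ G.R0) (hb : b ∈ G.R1) (ha' : a' ∈ G.R0)
    (hb' : b' ∈ G.R1) (h : a + b = a' + b') : a = a' := by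
  have h1 : a - a' ∈ G.R1 := by
    rw [show a - a' = b' - b by linear_combination h]
    exact sub_mem hb' hb
  have h01 : a - a' ∈ G.R0 ⊓ G.R1 := AddSubgroup.mem_inf.2 ⟨sub_mem ha ha', h1⟩
  rwa [G.inf_eq_bot, AddSubgroup.mem_bot, sub_eq_zero] at h01

lemma mul_mem_10 {a b : R} (ha : a ∈ G.R1) (hb : b ∈ G.R0) : a * b ∈ G.R1 :=
  mul_comm b a ▸ G.mul_mem_01 hb ha

lemma exists_mul_not_mem_of_not_sq_subset {p : AddSubgroup R}
    (h : ¬ (G.sq : Set R) ⊆ p) : ∃ s ∈ G.R1, ∃ t ∈ G.R1, s * t ∉ p := by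
  by_contra! hc
  exact h (mulSet_le hc)

lemma IsIdeal0.one_mem_iff {I : AddSubgroup R} (hI : G.IsIdeal0 I) :
    (1 : R) ∈ I ↔ (I : Set R) = G.R0 :=
  ⟨fun h => hI.1.antisymm fun a ha => by simpa using hI.2 a ha 1 h,
    fun h => (h ▸ G.one_mem : (1 : R) ∈ (I : Set R))⟩

variable (G) in
lemma isIdeal0_inf (J : Ideal R) : G.IsIdeal0 (J.toAddSubgroup ⊓ G.R0) :=
  ⟨fun _ hx => hx.2, fun a ha _ hx => ⟨J.mul_mem_left a hx.1, G.mul_mem_00 ha hx.2⟩⟩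

lemma IsMaximal0.exists_one_sub_mul_mem {p : AddSubgroup R} (hp : G.IsMaximal0 p) {x : R}
    (hx : x ∈ G.R0) (hxp : x ∉ p) : ∃ c ∈ G.R0, 1 - c * x ∈ p := by
  set I := p ⊔ G.R0.map (AddMonoidHom.mulRight x)
  have mem_I {y : R} : y ∈ I ↔ ∃ a ∈ p, ∃ c ∈ G.R0, a + c * x = y := by
    simp [I, AddSubgroup.mem_sup]
  have hI : G.IsIdeal0 I := by
    refine ⟨fun y hy => ?_, fun a ha y hy => ?_⟩
    · obtain ⟨b, hb, c, hc, rfl⟩ := mem_I.1 hy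
      exact add_mem (hp.1.1 hb) (G.mul_mem_00 hc hx)
    · obtain ⟨b, hb, c, hc, rfl⟩ := mem_I.1 hy
      exact mem_I.2 ⟨a * b, hp.1.2 a ha b hb, a * c, G.mul_mem_00 ha hc, by ring⟩
  rcases hp.2.2 I hI le_sup_left with h | h
  · have hxI : x ∈ (I : Set R) := mem_I.2 ⟨0, zero_mem p, 1, G.one_mem, by ring⟩
    rw [h] at hxI
    exact absurd hxI hxp
  · obtain ⟨a, ha, c, hc, hac⟩ := mem_I.1 (hI.one_mem_iff.2 h)
    exact ⟨c, hc, by rwa [← hac, add_sub_cancel_right]⟩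

lemma IsGradedIdeal.mem_of_add_mem {Q : Ideal R} (hQ : G.IsGradedIdeal Q) {a b : R}
    (ha : a ∈ G.R0) (hb : b ∈ G.R1) (hab : a + b ∈ Q) : a ∈ Q := by
  obtain ⟨a', b', ha', hb', ha'Q, -, h⟩ := hQ _ hab
  exact eq_of_add_eq_add ha hb ha' hb' h ▸ ha'Q

lemma IsGradedIdeal.sup {J K : Ideal R} (hJ : G.IsGradedIdeal J) (hK : G.IsGradedIdeal K) :
    G.IsGradedIdeal (J ⊔ K) := by
  intro x hx
  obtain ⟨j, hj, k, hk, rfl⟩ := Submodule.mem_sup.1 hx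
  obtain ⟨j0, j1, hj0, hj1, hj0J, hj1J, rfl⟩ := hJ j hj
  obtain ⟨k0, k1, hk0, hk1, hk0K, hk1K, rfl⟩ := hK k hk
  exact ⟨j0 + k0, j1 + k1, add_mem hj0 hk0, add_mem hj1 hk1,
    Submodule.add_mem_sup hj0J hk0K, Submodule.add_mem_sup hj1J hk1K, by ring⟩

lemma isGradedIdeal_span_singleton {x : R} (hx : x ∈ G.homogeneous) :
    G.IsGradedIdeal (Ideal.span {x}) := by
  intro y hy
  obtain ⟨r, rfl⟩ := Ideal.mem_span_singleton'.1 hy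
  obtain ⟨r0, hr0, r1, hr1, rfl⟩ := G.exists_add_eq r
  have mem {c : R} : c * x ∈ Ideal.span {x} :=
    Ideal.mul_mem_left _ c (Ideal.mem_span_singleton_self x)
  rcases hx with hx | hx
  · exact ⟨r0 * x, r1 * x, G.mul_mem_00 hr0 hx, mul_mem_10 hr1 hx, mem, mem, add_mul _ _ _⟩
  · exact ⟨r1 * x, r0 * x, G.mul_mem_11 hr1 hx, G.mul_mem_01 hr0 hx, mem, mem, by ring⟩

lemma IsGradedMaximal.exists_one_sub_mul_mem {Q : Ideal R} (hQ : G.IsGradedMaximal Q) {x : R}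
    (hx : x ∈ G.homogeneous) (hxQ : x ∉ Q) : ∃ r, 1 - r * x ∈ Q := by
  rcases hQ.2.2 _ (hQ.1.sup (isGradedIdeal_span_singleton hx)) le_sup_left with h | h
  · exact absurd (h ▸ Ideal.mem_sup_right (Ideal.mem_span_singleton_self x)) hxQ
  · have h1 : (1 : R) ∈ Q ⊔ Ideal.span {x} := h ▸ Submodule.mem_top
    obtain ⟨q, hq, k, hk, hqk⟩ := Submodule.mem_sup.1 h1
    obtain ⟨r, rfl⟩ := Ideal.mem_span_singleton'.1 hk
    exact ⟨r, by rwa [← hqk, add_sub_cancel_right]⟩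

lemma IsGradedMaximal.isMaximal0_inf {Q : Ideal R} (hQ : G.IsGradedMaximal Q) :
    G.IsMaximal0 (Q.toAddSubgroup ⊓ G.R0) := by
  have hp := G.isIdeal0_inf Q
  refine ⟨hp, fun h => hQ.2.1 ((Ideal.eq_top_iff_one Q).2 (hp.one_mem_iff.2 h).1), ?_⟩
  intro I hI hpI
  by_cases hIp : (I : Set R) ⊆ ↑(Q.toAddSubgroup ⊓ G.R0)
  · exact .inl (hIp.antisymm hpI)
  obtain ⟨x, hxI, hxp⟩ := Set.not_subset.1 hIp
  have hx : x ∈ G.R0 := hI.1 hxI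
  obtain ⟨r, hr⟩ := hQ.exists_one_sub_mul_mem (.inl hx) fun hxQ => hxp ⟨hxQ, hx⟩
  obtain ⟨r0, hr0, r1, hr1, rfl⟩ := G.exists_add_eq r
  have hr0Q : 1 - r0 * x ∈ Q :=
    hQ.1.mem_of_add_mem (sub_mem G.one_mem (G.mul_mem_00 hr0 hx))
      (neg_mem (mul_mem_10 hr1 hx)) (by convert hr using 1; ring)
  have h1 : (1 : R) ∈ I := by
    rw [← sub_add_cancel 1 (r0 * x)]
    exact add_mem (hpI (AddSubgroup.mem_inf.2 ⟨hr0Q, sub_mem G.one_mem (G.mul_mem_00 hr0 hx)⟩))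
      (hI.2 r0 hr0 x hxI)
  exact .inr (hI.one_mem_iff.1 h1)

lemma IsGradedMaximal.R1_subset {Q : Ideal R} (hQ : G.IsGradedMaximal Q)
    (hsq : (G.sq : Set R) ⊆ Q) : (G.R1 : Set R) ⊆ Q := by
  intro b hb
  by_contra hbQ
  obtain ⟨r, hr⟩ := hQ.exists_one_sub_mul_mem (.inr hb) hbQ
  obtain ⟨r0, hr0, r1, hr1, rfl⟩ := G.exists_add_eq r
  have hr1Q : 1 - r1 * b ∈ Q :=
    hQ.1.mem_of_add_mem (sub_mem G.one_mem (G.mul_mem_11 hr1 hb))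
      (neg_mem (G.mul_mem_01 hr0 hb)) (by convert hr using 1; ring)
  refine hQ.2.1 ((Ideal.eq_top_iff_one Q).2 ?_)
  rw [← sub_add_cancel 1 (r1 * b)]
  exact add_mem hr1Q (hsq (mul_mem_mulSet hr1 hb))

lemma mem_mulSet_of_forall_mul_mem {p : AddSubgroup R} (hp : G.IsMaximal0 p)
    (hsq : ¬ (G.sq : Set R) ⊆ p) {b : R} (hb : b ∈ G.R1) (hbp : ∀ t ∈ G.R1, t * b ∈ p) :
    b ∈ mulSet (p : Set R) (G.R1 : Set R) := by
  obtain ⟨s, hs, t, ht, hst⟩ := exists_mul_not_mem_of_not_sq_subset hsq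
  obtain ⟨c, hc, hcst⟩ := hp.exists_one_sub_mul_mem (G.mul_mem_11 hs ht) hst
  rw [show b = (1 - c * (s * t)) * b + (t * b) * (s * c) by ring]
  exact add_mem (mul_mem_mulSet hcst hb) (mul_mem_mulSet (hbp t ht) (mul_mem_10 hs hc))

lemma coe_eq_setSum_inf {Q : Ideal R} (hQ : G.IsGradedIdeal Q) :
    (Q : Set R) = setSum ↑(Q.toAddSubgroup ⊓ G.R0) ↑(Q.toAddSubgroup ⊓ G.R1) := by
  ext x
  refine ⟨fun hx => ?_, fun ⟨a, ha, b, hb, hx⟩ => hx ▸ Q.add_mem ha.1 hb.1⟩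
  obtain ⟨a, b, ha, hb, haQ, hbQ, rfl⟩ := hQ x hx
  exact ⟨a, ⟨haQ, ha⟩, b, ⟨hbQ, hb⟩, rfl⟩

lemma inf_R1_eq_mulSet {Q : Ideal R} (hp : G.IsMaximal0 (Q.toAddSubgroup ⊓ G.R0))
    (hsq : ¬ (G.sq : Set R) ⊆ ↑(Q.toAddSubgroup ⊓ G.R0)) :
    Q.toAddSubgroup ⊓ G.R1 = mulSet ↑(Q.toAddSubgroup ⊓ G.R0) (G.R1 : Set R) :=
  le_antisymm
    (fun _ hb => mem_mulSet_of_forall_mul_mem hp hsq hb.2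
      fun t ht => ⟨Q.mul_mem_left t hb.1, G.mul_mem_11 ht hb.2⟩)
    (mulSet_le fun _ ha b hb => ⟨Q.mul_mem_right b ha.1, G.mul_mem_01 ha.2 hb⟩)

lemma isGradedMaximal_of_coe_eq_setSum {p N : AddSubgroup R} {Q : Ideal R}
    (hp : G.IsMaximal0 p) (hN : (N : Set R) ⊆ G.R1)
    (hpN : ∀ b ∈ G.R1, (∀ t ∈ G.R1, t * b ∈ p) → b ∈ N)
    (hQ : (Q : Set R) = setSum ↑p ↑N) :
    G.IsGradedMaximal Q := by
  have mem_Q {x : R} : x ∈ Q ↔ ∃ a ∈ p, ∃ b ∈ N, x = a + b := by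
    rw [← SetLike.mem_coe, hQ]; rfl
  have hpQ {a : R} (ha : a ∈ p) : a ∈ Q := mem_Q.2 ⟨a, ha, 0, zero_mem N, (add_zero a).symm⟩
  refine ⟨fun x hx => ?_, fun htop => ?_, fun J hJ hQJ => ?_⟩
  · obtain ⟨a, ha, b, hb, rfl⟩ := mem_Q.1 hx
    exact ⟨a, b, hp.1.1 ha, hN hb, hpQ ha,
      mem_Q.2 ⟨0, zero_mem p, b, hb, (zero_add b).symm⟩, rfl⟩
  · obtain ⟨a, ha, b, hb, hab⟩ := mem_Q.1 (htop ▸ Submodule.mem_top : (1 : R) ∈ Q)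
    have ha1 : a = 1 := eq_of_add_eq_add (hp.1.1 ha) (hN hb) G.one_mem (zero_mem G.R1)
      (by rw [add_zero, hab])
    exact hp.2.1 (hp.1.one_mem_iff.1 (ha1 ▸ ha))
  · have hJ0 := G.isIdeal0_inf J
    rcases hp.2.2 _ hJ0 fun a ha => ⟨hQJ (hpQ ha), hp.1.1 ha⟩ with h | h
    · refine .inl (le_antisymm (fun y hy => ?_) hQJ)
      have mem_p {a : R} (haJ : a ∈ J) (ha : a ∈ G.R0) : a ∈ p := by
        rw [← SetLike.mem_coe, ← h]; exact ⟨haJ, ha⟩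
      obtain ⟨a, b, ha, hb, haJ, hbJ, rfl⟩ := hJ y hy
      exact mem_Q.2 ⟨a, mem_p haJ ha, b,
        hpN b hb fun t ht => mem_p (J.mul_mem_left t hbJ) (G.mul_mem_11 ht hb), rfl⟩
    · exact .inr ((Ideal.eq_top_iff_one J).2 (hJ0.one_mem_iff.2 h).1)

end Z2Grading

/-- the `ℤ₂`-graded maximal ideals of `R` are exactly the ideals `p + R₁`
with `p` a maximal ideal of `R₀` containing `R₁²`, together with the ideals `p + p·R₁` with
`p` a maximal ideal of `R₀` not containing `R₁²`. -/
theorem graded_maximal_classification {R : Type*} [CommRing R] (G : Z2Grading R)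
    (Q : Ideal R) :
    G.IsGradedMaximal Q ↔
      (∃ p : AddSubgroup R, G.IsMaximal0 p ∧ (G.sq : Set R) ⊆ ↑p ∧
        (Q : Set R) = setSum ↑p ↑G.R1) ∨
      (∃ p : AddSubgroup R, G.IsMaximal0 p ∧ ¬ ((G.sq : Set R) ⊆ ↑p) ∧
        (Q : Set R) = setSum ↑p (mulSet (p : Set R) (G.R1 : Set R) : Set R)) := by
  constructor
  · intro hQ
    have hp := hQ.isMaximal0_inf
    by_cases hsq : (G.sq : Set R) ⊆ ↑(Q.toAddSubgroup ⊓ G.R0)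
    · have hR1 : Q.toAddSubgroup ⊓ G.R1 = G.R1 :=
        inf_eq_right.2 (hQ.R1_subset fun x hx => (hsq hx).1)
      exact .inl ⟨_, hp, hsq, hR1 ▸ Z2Grading.coe_eq_setSum_inf hQ.1⟩
    · exact .inr ⟨_, hp, hsq,
        Z2Grading.inf_R1_eq_mulSet hp hsq ▸ Z2Grading.coe_eq_setSum_inf hQ.1⟩
  · rintro (⟨p, hp, -, hQ⟩ | ⟨p, hp, hsq, hQ⟩)
    · exact Z2Grading.isGradedMaximal_of_coe_eq_setSum hp subset_rfl (fun _ hb _ => hb) hQ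
    · exact Z2Grading.isGradedMaximal_of_coe_eq_setSum hp
        (mulSet_le fun _ ha _ hb => G.mul_mem_01 (hp.1.1 ha) hb)
        (fun _ hb => Z2Grading.mem_mulSet_of_forall_mul_mem hp hsq hb) hQ
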